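/- Output states and corrections in the iterated CHSH game strategy: define T₀ = Φ⁺_{0,1}, T₁ = Φ⁺_{1,7}, T₂ = Φ⁺_{2,7}, T₃ = Φ⁺_{3,1}. Then for every μ ∈ ℤ₄: (i) tr₂₃( (Φ⁺_{0,1} ⊗ Φ⁺_{0,1}) · (I₂ ⊗ Φ⁺_{μ,1} ⊗ I₂) ) = ¼ T_μ, and (ii) the local correction returns the reference state: (σ_μ ⊗ I) T_μ (σ_μ ⊗ I) = Φ⁺_{0,1}. -/

import Mathlib

/-!
Write `vecOuter X` for `|X⟩⟩⟨⟨X|`, where `|X⟩⟩ = ∑ᵢⱼ X i j |ij⟩` vectorises a 2×2 matrix. Since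
`(A ⊗ I) |X⟩⟩ = |A X⟩⟩`, every state `Φ⁺_{μ,m}` equals `½ |X⟩⟩⟨⟨X|` with `X = (σ_μ Rᵐ)†`.
Entanglement swapping is then matrix multiplication:
`tr₂₃ ((|X⟩⟩⟨⟨X| ⊗ |Y⟩⟩⟨⟨Y|) (I ⊗ |Z⟩⟩⟨⟨Z| ⊗ I)) = |X Z̄ Y⟩⟩⟨⟨X Z̄ Y|`, and as `R` is a diagonal
unitary, `X = Y = R†`, `Z = (σ_μ R)†` give `X Z̄ Y = σ_μᵀ R†`. Using `R⁸ = -1`, the matrix of `T_μ`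
is `±σ_μᵀ R†`, and the correction works because `σ_μ σ_μᵀ = ±1`.
-/

open Matrix Kronecker Complex

noncomputable section

/-- The Pauli matrices indexed by ℤ₄. -/
def pauli : ZMod 4 → Matrix (Fin 2) (Fin 2) ℂ := fun μ =>
  if μ = 0 then 1
  else if μ = 1 then !![0, 1; 1, 0]
  else if μ = 2 then !![0, -Complex.I; Complex.I, 0]
  else !![1, 0; 0, -1]

/-- The rotation R = diag(e^{-iπ/8}, e^{iπ/8}). -/
def R : Matrix (Fin 2) (Fin 2) ℂ :=
  !![Complex.exp (-(Real.pi / 8 : ℝ) * Complex.I), 0;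
     0, Complex.exp ((Real.pi / 8 : ℝ) * Complex.I)]

/-- The Bell vector |Φ⁺⟩ = (|00⟩+|11⟩)/√2. -/
def bell : Fin 2 × Fin 2 → ℂ := fun p =>
  if p.1 = p.2 then ((Real.sqrt 2 : ℝ) : ℂ)⁻¹ else 0

/-- The Bell projector P_Φ = |Φ⁺⟩⟨Φ⁺|. -/
def PΦ : Matrix (Fin 2 × Fin 2) (Fin 2 × Fin 2) ℂ :=
  Matrix.of fun p q => bell p * (starRingEnd ℂ) (bell q)

/-- Φ⁺_{μ,m} = ((σ_μ R^m)† ⊗ I) P_Φ ((σ_μ R^m) ⊗ I). -/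
def PhiProj (μ : ZMod 4) (m : ZMod 8) : Matrix (Fin 2 × Fin 2) (Fin 2 × Fin 2) ℂ :=
  ((pauli μ * R ^ m.val)ᴴ ⊗ₖ (1 : Matrix (Fin 2) (Fin 2) ℂ)) * PΦ *
    ((pauli μ * R ^ m.val) ⊗ₖ (1 : Matrix (Fin 2) (Fin 2) ℂ))

/-- r = 2^{1/4}. -/
def r : ℝ := (2 : ℝ) ^ ((1 : ℝ) / 4)

/-- The stretched stabilizer states Ω. -/
def Ω : Set (Matrix (Fin 2) (Fin 2) ℂ) :=
  { (1 / 2 : ℂ) • (1 + (r : ℂ) • pauli 1),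
    (1 / 2 : ℂ) • (1 - (r : ℂ) • pauli 1),
    (1 / 2 : ℂ) • (1 + (r : ℂ) • pauli 2),
    (1 / 2 : ℂ) • (1 - (r : ℂ) • pauli 2),
    (1 / 2 : ℂ) • (1 + pauli 3),
    (1 / 2 : ℂ) • (1 - pauli 3) }

/-- The set Φ of entangled states/effects. -/
def PhiSet : Set (Matrix (Fin 2 × Fin 2) (Fin 2 × Fin 2) ℂ) :=
  { Q | ∃ μ : ZMod 4, ∃ m : ZMod 8, m ∈ ({1, 3, 5, 7} : Set (ZMod 8)) ∧ Q = PhiProj μ m }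

/-- Place a 4×4 matrix `Q` on tensor factors (2,3) of (ℂ²)⊗⁴ (identity on factors 1 and 4). -/
def mid (Q : Matrix (Fin 2 × Fin 2) (Fin 2 × Fin 2) ℂ) :
    Matrix ((Fin 2 × Fin 2) × (Fin 2 × Fin 2)) ((Fin 2 × Fin 2) × (Fin 2 × Fin 2)) ℂ :=
  Matrix.of fun p q =>
    (1 : Matrix (Fin 2) (Fin 2) ℂ) p.1.1 q.1.1 *
      Q (p.1.2, p.2.1) (q.1.2, q.2.1) *
      (1 : Matrix (Fin 2) (Fin 2) ℂ) p.2.2 q.2.2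

/-- Partial trace over the first tensor factor of ℂ² ⊗ ℂ². -/
def ptr1 (M : Matrix (Fin 2 × Fin 2) (Fin 2 × Fin 2) ℂ) : Matrix (Fin 2) (Fin 2) ℂ :=
  Matrix.of fun i j => ∑ a : Fin 2, M (a, i) (a, j)

/-- Partial trace over the second tensor factor of ℂ² ⊗ ℂ². -/
def ptr2 (M : Matrix (Fin 2 × Fin 2) (Fin 2 × Fin 2) ℂ) : Matrix (Fin 2) (Fin 2) ℂ :=
  Matrix.of fun i j => ∑ a : Fin 2, M (i, a) (j, a)

/-- Partial trace over the second and third tensor factors of (ℂ²)⊗⁴. -/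
def ptr23
    (M : Matrix ((Fin 2 × Fin 2) × (Fin 2 × Fin 2)) ((Fin 2 × Fin 2) × (Fin 2 × Fin 2)) ℂ) :
    Matrix (Fin 2 × Fin 2) (Fin 2 × Fin 2) ℂ :=
  Matrix.of fun p q => ∑ b : Fin 2, ∑ c : Fin 2, M ((p.1, b), (c, p.2)) ((q.1, b), (c, q.2))

end

/-- The output states T₀ = Φ⁺_{0,1}, T₁ = Φ⁺_{1,7}, T₂ = Φ⁺_{2,7}, T₃ = Φ⁺_{3,1}. -/
noncomputable def T : ZMod 4 → Matrix (Fin 2 × Fin 2) (Fin 2 × Fin 2) ℂ := fun μ =>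
  if μ = 0 then PhiProj 0 1
  else if μ = 1 then PhiProj 1 7
  else if μ = 2 then PhiProj 2 7
  else PhiProj 3 1

def vecOuter {m n : Type*} (X : Matrix m n ℂ) : Matrix (m × n) (m × n) ℂ :=
  of fun p q => X p.1 p.2 * star (X q.1 q.2)

section vecOuter

variable {m n : Type*}

theorem vecOuter_neg (X : Matrix m n ℂ) : vecOuter (-X) = vecOuter X := by
  ext p q
  simp [vecOuter]

theorem kronecker_one_mul_vecOuter_mul [Fintype m] [DecidableEq m] [Fintype n] [DecidableEq n]
    (B : Matrix m m ℂ) (X : Matrix m n ℂ) :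
    (B ⊗ₖ (1 : Matrix n n ℂ)) * vecOuter X * (Bᴴ ⊗ₖ (1 : Matrix n n ℂ)) = vecOuter (B * X) := by
  ext ⟨i, j⟩ ⟨k, l⟩
  simp only [vecOuter, RCLike.star_def, mul_apply, kroneckerMap_apply, one_apply, mul_ite, mul_one,
    mul_zero, of_apply, ite_mul, zero_mul, Fintype.sum_prod_type, Finset.sum_ite_eq,
    Finset.mem_univ, ↓reduceIte, conjTranspose_apply, Finset.sum_mul, Finset.sum_ite_eq', star_sum,
    star_mul', Finset.mul_sum]
  exact Finset.sum_congr rfl fun _ _ => Finset.sum_congr rfl fun _ _ => by ring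

end vecOuter

theorem PΦ_eq_vecOuter : PΦ = (1 / 2 : ℂ) • vecOuter 1 := by
  have h : (((√2 : ℝ) : ℂ)⁻¹) * ((√2 : ℝ) : ℂ)⁻¹ = 1 / 2 := by
    rw [← mul_inv, ← ofReal_mul, Real.mul_self_sqrt zero_le_two]; norm_num
  ext ⟨i, j⟩ ⟨k, l⟩
  simp only [PΦ, bell, vecOuter, of_apply, one_apply, Matrix.smul_apply, smul_eq_mul]
  split_ifs <;> simp [h]

theorem PhiProj_eq_vecOuter (μ : ZMod 4) (m : ZMod 8) :
    PhiProj μ m = (1 / 2 : ℂ) • vecOuter (pauli μ * R ^ m.val)ᴴ := by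
  have h := kronecker_one_mul_vecOuter_mul (pauli μ * R ^ m.val)ᴴ (1 : Matrix (Fin 2) (Fin 2) ℂ)
  rw [conjTranspose_conjTranspose, Matrix.mul_one] at h
  rw [PhiProj, PΦ_eq_vecOuter, Matrix.mul_smul, Matrix.smul_mul, h]

theorem mid_smul (c : ℂ) (Q : Matrix (Fin 2 × Fin 2) (Fin 2 × Fin 2) ℂ) :
    mid (c • Q) = c • mid Q := by
  ext p q
  simp only [mid, of_apply, Matrix.smul_apply, smul_eq_mul]
  ring

theorem ptr23_smul (c : ℂ)
    (M : Matrix ((Fin 2 × Fin 2) × (Fin 2 × Fin 2)) ((Fin 2 × Fin 2) × (Fin 2 × Fin 2)) ℂ) :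
    ptr23 (c • M) = c • ptr23 M := by
  ext p q
  simp only [ptr23, of_apply, Matrix.smul_apply, smul_eq_mul, Finset.mul_sum]

theorem ptr23_kronecker_vecOuter_mul_mid_vecOuter (X Y Z : Matrix (Fin 2) (Fin 2) ℂ) :
    ptr23 ((vecOuter X ⊗ₖ vecOuter Y) * mid (vecOuter Z)) = vecOuter (X * Zᴴᵀ * Y) := by
  ext ⟨i, j⟩ ⟨k, l⟩
  simp only [ptr23, vecOuter, RCLike.star_def, mid, one_apply, of_apply, ite_mul, one_mul, zero_mul,
    mul_ite, mul_one, mul_zero, mul_apply, kroneckerMap_apply, Fintype.sum_prod_type,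
    Finset.sum_ite_eq', Finset.mem_univ, ↓reduceIte, Finset.sum_ite_irrel, Fin.sum_univ_two,
    Finset.sum_const_zero, transpose_apply, conjTranspose_apply, star_add, star_mul',
    RingHomCompTriple.comp_apply, RingHom.id_apply]
  ring

theorem R_eq_diagonal :
    R = diagonal ![exp (-(Real.pi / 8 : ℝ) * I), exp ((Real.pi / 8 : ℝ) * I)] := by
  ext i j
  fin_cases i <;> fin_cases j <;> rfl

theorem R_transpose : Rᵀ = R := by
  rw [R_eq_diagonal, diagonal_transpose]

theorem R_conjTranspose :
    Rᴴ = diagonal ![exp ((Real.pi / 8 : ℝ) * I), exp (-(Real.pi / 8 : ℝ) * I)] := by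
  rw [R_eq_diagonal, diagonal_conjTranspose]
  congr 1
  ext i
  fin_cases i <;> simp [← exp_conj, map_ofNat]

theorem R_conjTranspose_mul_self : Rᴴ * R = 1 := by
  rw [R_conjTranspose, R_eq_diagonal, diagonal_mul_diagonal, ← diagonal_one]
  congr 1
  ext i
  fin_cases i <;> simp [← exp_add]

theorem R_pow_eight : R ^ 8 = -1 := by
  have h : (8 : ℂ) * (Real.pi / 8 * I) = Real.pi * I := by ring
  rw [R_eq_diagonal, diagonal_pow]
  ext i j
  fin_cases i <;> fin_cases j <;> simp [← exp_nat_mul, h, exp_neg]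

theorem R_pow_seven : R ^ 7 = -Rᴴ := by
  calc R ^ 7 = R ^ 8 * Rᴴ := by
        rw [show 8 = 7 + 1 from rfl, pow_succ R 7, Matrix.mul_assoc,
          mul_eq_one_comm.mp R_conjTranspose_mul_self, Matrix.mul_one]
    _ = -Rᴴ := by rw [R_pow_eight, neg_one_mul]

theorem pauli_zero : pauli 0 = 1 := rfl
theorem pauli_one : pauli 1 = !![0, 1; 1, 0] := rfl
theorem pauli_two : pauli 2 = !![0, -I; I, 0] := rfl
theorem pauli_three : pauli 3 = !![1, 0; 0, -1] := rfl

theorem ZMod.cases_four {p : ZMod 4 → Prop} (h0 : p 0) (h1 : p 1) (h2 : p 2) (h3 : p 3)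
    (μ : ZMod 4) : p μ := by
  obtain rfl | rfl | rfl | rfl : μ = 0 ∨ μ = 1 ∨ μ = 2 ∨ μ = 3 := by revert μ; decide
  exacts [h0, h1, h2, h3]

theorem pauli_conjTranspose (μ : ZMod 4) : (pauli μ)ᴴ = pauli μ := by
  induction μ using ZMod.cases_four <;>
  · ext i j
    fin_cases i <;> fin_cases j <;> simp [pauli_zero, pauli_one, pauli_two, pauli_three]

theorem pauli_mul_transpose (μ : ZMod 4) :
    pauli μ * (pauli μ)ᵀ = 1 ∨ pauli μ * (pauli μ)ᵀ = -1 := by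
  induction μ using ZMod.cases_four
  · left; simp [pauli_zero]
  · left; ext i j
    fin_cases i <;> fin_cases j <;> simp [pauli_one, mul_apply, Fin.sum_univ_two]
  · right; ext i j
    fin_cases i <;> fin_cases j <;> simp [pauli_two, mul_apply, Fin.sum_univ_two, mul_comm]
  · left; ext i j
    fin_cases i <;> fin_cases j <;> simp [pauli_three, mul_apply, Fin.sum_univ_two]

theorem T_eq_vecOuter (μ : ZMod 4) : T μ = (1 / 2 : ℂ) • vecOuter ((pauli μ)ᵀ * Rᴴ) := by
  have h1 : (1 : ZMod 8).val = 1 := rfl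
  have h7 : (7 : ZMod 8).val = 7 := rfl
  induction μ using ZMod.cases_four
  · simp [T, PhiProj_eq_vecOuter, pauli_zero, h1]
  · rw [T, if_neg (by decide), if_pos rfl, PhiProj_eq_vecOuter, h7, R_pow_seven, ← vecOuter_neg,
      conjTranspose_mul, conjTranspose_neg, pauli_conjTranspose, conjTranspose_conjTranspose,
      R_conjTranspose, R_eq_diagonal]
    congr 2
    ext i j
    fin_cases i <;> fin_cases j <;> simp [pauli_one, mul_apply, Fin.sum_univ_two]
  · rw [T, if_neg (by decide), if_neg (by decide), if_pos rfl, PhiProj_eq_vecOuter, h7,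
      R_pow_seven, conjTranspose_mul, conjTranspose_neg, pauli_conjTranspose,
      conjTranspose_conjTranspose, R_conjTranspose, R_eq_diagonal]
    congr 2
    ext i j
    fin_cases i <;> fin_cases j <;> simp [pauli_two, mul_apply, Fin.sum_univ_two, mul_comm]
  · rw [T, if_neg (by decide), if_neg (by decide), if_neg (by decide), PhiProj_eq_vecOuter, h1,
      pow_one, conjTranspose_mul, pauli_conjTranspose, R_conjTranspose]
    congr 2
    ext i j
    fin_cases i <;> fin_cases j <;> simp [pauli_three, mul_apply, Fin.sum_univ_two]

/-- Output states and corrections in the iterated CHSH game strategy: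
(i) tr₂₃((Φ⁺_{0,1} ⊗ Φ⁺_{0,1})(I₂ ⊗ Φ⁺_{μ,1} ⊗ I₂)) = ¼ T_μ, and
(ii) (σ_μ ⊗ I) T_μ (σ_μ ⊗ I) = Φ⁺_{0,1}. -/
theorem stmt_16 (μ : ZMod 4) :
    ptr23 ((PhiProj 0 1 ⊗ₖ PhiProj 0 1) * mid (PhiProj μ 1)) = (1 / 4 : ℂ) • T μ ∧
    (pauli μ ⊗ₖ (1 : Matrix (Fin 2) (Fin 2) ℂ)) * T μ *
        (pauli μ ⊗ₖ (1 : Matrix (Fin 2) (Fin 2) ℂ)) = PhiProj 0 1 := by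
  have hval : (1 : ZMod 8).val = 1 := rfl
  have hΦ : PhiProj 0 1 = (1 / 2 : ℂ) • vecOuter Rᴴ := by
    simpa [pauli_zero, hval] using PhiProj_eq_vecOuter 0 1
  constructor
  · have hswap : Rᴴ * (pauli μ * R)ᴴᴴᵀ * Rᴴ = (pauli μ)ᵀ * Rᴴ := by
      rw [conjTranspose_conjTranspose, transpose_mul, R_transpose, ← Matrix.mul_assoc,
        R_conjTranspose_mul_self, Matrix.one_mul]
    rw [hΦ, PhiProj_eq_vecOuter, hval, pow_one]
    simp only [smul_kronecker, kronecker_smul, mid_smul, Matrix.smul_mul, Matrix.mul_smul,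
      ptr23_smul, smul_smul]
    rw [ptr23_kronecker_vecOuter_mul_mid_vecOuter, hswap, T_eq_vecOuter, smul_smul]
    norm_num
  · have hconj := kronecker_one_mul_vecOuter_mul (pauli μ) ((pauli μ)ᵀ * Rᴴ)
    rw [pauli_conjTranspose, ← Matrix.mul_assoc] at hconj
    rw [T_eq_vecOuter, Matrix.mul_smul, Matrix.smul_mul, hconj, hΦ]
    rcases pauli_mul_transpose μ with h | h <;> simp [h, vecOuter_neg]
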